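/- Let c > 0 and k ≥ 1 an integer, and define g(b) = sqrt( b²/2 + sqrt(1 + b⁴/4) ). In ℝ², let J be the 2×2 all-ones matrix, Σ₁ = diag(c+1, 1) + J, Σ₂ = diag(1, c+1) + J, and let q_{Σ₁}, q_{Σ₂} be top eigenvectors of Σ₁ and Σ₂, each chosen with nonnegative coordinates. Let B be the 2×2 symmetric matrix with eigenvector u₁ = (1/√2)(1,1)ᵀ of eigenvalue α = g((c+7)^k) and eigenvector u₂ = (1/√2)(1,−1)ᵀ of eigenvalue β = g((c+3)^k). Then cos(B q_{Σ₁}, B q_{Σ₂}) = (2 + γ√(c² + 4)) / (2γ + √(c² + 4)) with γ = (α² − β²)/(α² + β²); this value is strictly greater than cos(q_{Σ₁}, q_{Σ₂}) = 2/√(4 + c²), is strictly increasing in k, and converges to 1 as k → ∞. -/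

import Mathlib

open Matrix Filter

/-- Cosine similarity of two vectors in `ℝ^n` (with respect to the standard dot product). -/
noncomputable def cosSim {n : ℕ} (u v : Fin n → ℝ) : ℝ :=
  (u ⬝ᵥ v) / (Real.sqrt (u ⬝ᵥ u) * Real.sqrt (v ⬝ᵥ v))

/-- `g b` is the limiting encoder singular value of a two-layer linear autoencoder trained
by gradient flow from initialization `A(0) = 0` and encoder singular value `b`. -/
noncomputable def gAE (b : ℝ) : ℝ :=
  Real.sqrt (b ^ 2 / 2 + Real.sqrt (1 + b ^ 4 / 4))

/-- The spectral-gap parameter `γ_k = (α² − β²)/(α² + β²)` with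
`α = g((c+7)^k)`, `β = g((c+3)^k)`. -/
noncomputable def gammaAE (c : ℝ) (k : ℕ) : ℝ :=
  (gAE ((c + 7) ^ k) ^ 2 - gAE ((c + 3) ^ k) ^ 2) /
    (gAE ((c + 7) ^ k) ^ 2 + gAE ((c + 3) ^ k) ^ 2)

/-- The post-embedding cosine similarity value
`(2 + γ_k √(c²+4)) / (2 γ_k + √(c²+4))`. -/
noncomputable def cosVal (c : ℝ) (k : ℕ) : ℝ :=
  (2 + gammaAE c k * Real.sqrt (c ^ 2 + 4)) / (2 * gammaAE c k + Real.sqrt (c ^ 2 + 4))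

/-! ### Auxiliary machinery -/

noncomputable def psiAE (t : ℝ) : ℝ := t + Real.sqrt (4 + t ^ 2)

lemma psiAE_pos (t : ℝ) (ht : 0 ≤ t) : 0 < psiAE t := by
  unfold psiAE
  have : 0 < Real.sqrt (4 + t ^ 2) := Real.sqrt_pos.mpr (by positivity)
  linarith

lemma psiAE_eq_exp (t : ℝ) : psiAE t = 2 * Real.exp (Real.arsinh (t / 2)) := by
  rw [Real.exp_arsinh]
  have h : Real.sqrt (1 + (t / 2) ^ 2) = Real.sqrt (4 + t ^ 2) / 2 := by
    rw [show (1 : ℝ) + (t / 2) ^ 2 = (4 + t ^ 2) / 2 ^ 2 by ring,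
      Real.sqrt_div (by positivity), Real.sqrt_sq (by norm_num)]
  rw [h]; unfold psiAE; ring

lemma psiAE_strictMono : StrictMono psiAE := by
  intro a b hab
  rw [psiAE_eq_exp, psiAE_eq_exp]
  have := Real.arsinh_lt_arsinh.mpr (show a / 2 < b / 2 by linarith)
  have := Real.exp_lt_exp.mpr this
  linarith

lemma arsinh_diff_mono {lam : ℝ} (hlam : 1 < lam) :
    StrictMono (fun t : ℝ => Real.arsinh (lam * t) - Real.arsinh t) := by
  have hlam0 : 0 < lam := by linarith
  have hdiff : ∀ t : ℝ, HasDerivAt (fun t : ℝ => Real.arsinh (lam * t) - Real.arsinh t)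
      (lam * (Real.sqrt (1 + (lam * t) ^ 2))⁻¹ - (Real.sqrt (1 + t ^ 2))⁻¹) t := by
    intro t
    have h1 : HasDerivAt (fun t : ℝ => Real.arsinh (lam * t))
        ((Real.sqrt (1 + (lam * t) ^ 2))⁻¹ * lam) t :=
      (Real.hasDerivAt_arsinh (lam * t)).comp t
        (by simpa using (hasDerivAt_id t).const_mul lam)
    have h2 := h1.sub (Real.hasDerivAt_arsinh t)
    rw [mul_comm (Real.sqrt (1 + (lam * t) ^ 2))⁻¹ lam] at h2
    exact h2
  apply strictMono_of_deriv_pos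
  intro t
  rw [(hdiff t).deriv]
  have hs1 : 0 < Real.sqrt (1 + t ^ 2) := Real.sqrt_pos.mpr (by positivity)
  have hs2 : 0 < Real.sqrt (1 + (lam * t) ^ 2) := Real.sqrt_pos.mpr (by positivity)
  have hlt : Real.sqrt (1 + (lam * t) ^ 2) < lam * Real.sqrt (1 + t ^ 2) := by
    have : lam * Real.sqrt (1 + t ^ 2) = Real.sqrt (lam ^ 2 * (1 + t ^ 2)) := by
      rw [Real.sqrt_mul (by positivity), Real.sqrt_sq hlam0.le]
    rw [this]
    apply Real.sqrt_lt_sqrt (by positivity)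
    nlinarith
  have hinv : (lam * Real.sqrt (1 + t ^ 2))⁻¹ < (Real.sqrt (1 + (lam * t) ^ 2))⁻¹ :=
    inv_strictAnti₀ hs2 hlt
  have : lam * (lam * Real.sqrt (1 + t ^ 2))⁻¹ < lam * (Real.sqrt (1 + (lam * t) ^ 2))⁻¹ :=
    (mul_lt_mul_iff_right₀ hlam0).mpr hinv
  rw [mul_inv, ← mul_assoc, mul_inv_cancel₀ (ne_of_gt hlam0), one_mul] at this
  linarith

/-- the key ratio lemma -/
lemma psiAE_ratio {lam a b : ℝ} (hlam : 1 < lam) (hb : 0 ≤ b) (hba : b ≤ a) :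
    psiAE (lam * b) * psiAE a ≤ psiAE (lam * a) * psiAE b := by
  have h := (arsinh_diff_mono hlam).monotone (show b / 2 ≤ a / 2 by linarith)
  rw [psiAE_eq_exp, psiAE_eq_exp, psiAE_eq_exp, psiAE_eq_exp]
  rw [show lam * (b / 2) = lam * b / 2 by ring, show lam * (a / 2) = lam * a / 2 by ring] at h
  have := Real.exp_le_exp.mpr (show Real.arsinh (lam * b / 2) + Real.arsinh (a / 2) ≤
      Real.arsinh (lam * a / 2) + Real.arsinh (b / 2) by linarith)
  rw [Real.exp_add, Real.exp_add] at this
  nlinarith [Real.exp_pos (Real.arsinh (lam * b / 2)), Real.exp_pos (Real.arsinh (a / 2))]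

lemma gAE_sq (b : ℝ) : gAE b ^ 2 = psiAE (b ^ 2) / 2 := by
  unfold gAE psiAE
  rw [Real.sq_sqrt]
  · have h : Real.sqrt (1 + b ^ 4 / 4) = Real.sqrt (4 + (b ^ 2) ^ 2) / 2 := by
      rw [show (1 : ℝ) + b ^ 4 / 4 = (4 + (b ^ 2) ^ 2) / 2 ^ 2 by ring,
        Real.sqrt_div (by positivity), Real.sqrt_sq (by norm_num)]
    rw [h]; ring
  · positivity

lemma gAE_pos (b : ℝ) : 0 < gAE b := by
  unfold gAE
  apply Real.sqrt_pos.mpr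
  have : 0 < Real.sqrt (1 + b ^ 4 / 4) := Real.sqrt_pos.mpr (by positivity)
  nlinarith [sq_nonneg b]

lemma gammaAE_eq (c : ℝ) (k : ℕ) :
    gammaAE c k = (psiAE (((c + 7) ^ 2) ^ k) - psiAE (((c + 3) ^ 2) ^ k)) /
      (psiAE (((c + 7) ^ 2) ^ k) + psiAE (((c + 3) ^ 2) ^ k)) := by
  unfold gammaAE
  rw [gAE_sq, gAE_sq, ← pow_right_comm (c+7), ← pow_right_comm (c+3)]
  have h7 := psiAE_pos ((((c+7)^2)^k)) (by positivity)
  have h3 := psiAE_pos ((((c+3)^2)^k)) (by positivity)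
  field_simp

lemma gammaAE_lt_succ {c : ℝ} (hc : 0 < c) (k : ℕ) :
    gammaAE c k < gammaAE c (k + 1) := by
  have hQ1 : (1:ℝ) < (c + 3) ^ 2 := by nlinarith
  have hPQ : (c + 3) ^ 2 < (c + 7) ^ 2 := by nlinarith
  set P := (c + 7) ^ 2
  set Q := (c + 3) ^ 2
  have hPk : (0:ℝ) < P ^ k := by positivity
  have hQk : (0:ℝ) < Q ^ k := by positivity
  have hQP : Q ^ k ≤ P ^ k := pow_le_pow_left₀ (by positivity : (0:ℝ) ≤ Q) hPQ.le k
  have hpu := psiAE_pos (P ^ k) hPk.le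
  have hpv := psiAE_pos (Q ^ k) hQk.le
  have hpu' := psiAE_pos (P ^ (k+1)) (by positivity)
  have hpv' := psiAE_pos (Q ^ (k+1)) (by positivity)
  have key : psiAE (P ^ k) * psiAE (Q ^ (k+1)) < psiAE (P ^ (k+1)) * psiAE (Q ^ k) := by
    have h1 : psiAE (Q ^ (k+1)) * psiAE (P ^ k) ≤ psiAE (Q * P ^ k) * psiAE (Q ^ k) := by
      have := psiAE_ratio (lam := Q) hQ1 hQk.le hQP
      rw [show Q ^ (k+1) = Q * Q ^ k by ring]
      linarith [this]
    have h2 : psiAE (Q * P ^ k) < psiAE (P ^ (k+1)) := by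
      apply psiAE_strictMono
      rw [show P ^ (k+1) = P * P ^ k by ring]
      exact (mul_lt_mul_iff_left₀ hPk).mpr hPQ
    calc psiAE (P ^ k) * psiAE (Q ^ (k+1)) = psiAE (Q ^ (k+1)) * psiAE (P ^ k) := by ring
      _ ≤ psiAE (Q * P ^ k) * psiAE (Q ^ k) := h1
      _ < psiAE (P ^ (k+1)) * psiAE (Q ^ k) := (mul_lt_mul_iff_left₀ hpv).mpr h2
  rw [gammaAE_eq, gammaAE_eq]
  rw [div_lt_div_iff₀ (by linarith) (by linarith)]
  nlinarith [key]

lemma gammaAE_strictMono {c : ℝ} (hc : 0 < c) : StrictMono (gammaAE c) :=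
  strictMono_nat_of_lt_succ (gammaAE_lt_succ hc)

lemma gammaAE_nonneg {c : ℝ} (hc : 0 < c) (k : ℕ) : 0 ≤ gammaAE c k := by
  have h0 : gammaAE c 0 = 0 := by
    unfold gammaAE; simp
  rw [← h0]
  exact (gammaAE_strictMono hc).monotone (Nat.zero_le k)

lemma gammaAE_pos {c : ℝ} (hc : 0 < c) {k : ℕ} (hk : 1 ≤ k) : 0 < gammaAE c k := by
  have h0 : gammaAE c 0 = 0 := by unfold gammaAE; simp
  have := (gammaAE_strictMono hc) (show 0 < k from hk)
  rwa [h0] at this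

lemma gammaAE_lt_one {c : ℝ} (hc : 0 < c) (k : ℕ) : gammaAE c k < 1 := by
  rw [gammaAE_eq]
  have h3 := psiAE_pos (((c+3)^2) ^ k) (by positivity)
  have h7 := psiAE_pos (((c+7)^2) ^ k) (by positivity)
  rw [div_lt_one (by linarith)]
  linarith

lemma gammaAE_tendsto {c : ℝ} (hc : 0 < c) :
    Tendsto (fun k : ℕ => gammaAE c k) atTop (nhds 1) := by
  have hQ1 : (1:ℝ) ≤ (c + 3) ^ 2 := by nlinarith
  have hPQ : (c + 3) ^ 2 < (c + 7) ^ 2 := by nlinarith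
  set P := (c + 7) ^ 2 with hP
  set Q := (c + 3) ^ 2 with hQ
  have hPpos : (0:ℝ) < P := by positivity
  have hbound : ∀ k : ℕ, 1 - gammaAE c k ≤ 8 * (Q / P) ^ k := by
    intro k
    have hPk : (0:ℝ) < P ^ k := by positivity
    have hQk : (1:ℝ) ≤ Q ^ k := one_le_pow₀ hQ1
    have hQkP : Q ^ k ≤ P ^ k := pow_le_pow_left₀ (by positivity : (0:ℝ) ≤ Q) hPQ.le k
    have hpu := psiAE_pos (P ^ k) hPk.le
    have hpv := psiAE_pos (Q ^ k) (by positivity)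
    have h1γ : 1 - gammaAE c k = 2 * psiAE (Q ^ k) / (psiAE (P ^ k) + psiAE (Q ^ k)) := by
      rw [gammaAE_eq, ← hP, ← hQ]
      field_simp
      ring
    have hψv : psiAE (Q ^ k) ≤ 4 * Q ^ k := by
      unfold psiAE
      have : Real.sqrt (4 + (Q ^ k) ^ 2) ≤ 2 + Q ^ k := by
        rw [show (2:ℝ) + Q ^ k = Real.sqrt ((2 + Q ^ k) ^ 2) from
          (Real.sqrt_sq (by linarith)).symm]
        apply Real.sqrt_le_sqrt
        nlinarith
      linarith
    have hψu : P ^ k ≤ psiAE (P ^ k) := by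
      unfold psiAE
      have := Real.sqrt_nonneg (4 + (P ^ k) ^ 2)
      linarith
    rw [h1γ, div_pow, ← mul_div_assoc, div_le_div_iff₀ (by linarith) hPk]
    nlinarith
  have hupper : Tendsto (fun k : ℕ => 8 * (Q / P) ^ k) atTop (nhds 0) := by
    have h0 : (0:ℝ) ≤ Q / P := by positivity
    have h1 : Q / P < 1 := (div_lt_one hPpos).mpr hPQ
    have := (tendsto_pow_atTop_nhds_zero_of_lt_one h0 h1).const_mul (8:ℝ)
    simpa using this
  have hsq : Tendsto (fun k : ℕ => 1 - gammaAE c k) atTop (nhds 0) :=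
    squeeze_zero (fun k => by linarith [gammaAE_lt_one hc k]) hbound hupper
  have h := (tendsto_const_nhds : Tendsto (fun _ : ℕ => (1:ℝ)) atTop (nhds 1)).sub hsq
  have heq : (fun k : ℕ => (1:ℝ) - (1 - gammaAE c k)) = fun k => gammaAE c k := by
    funext k; ring
  rw [heq] at h
  simpa using h

lemma eig_dir (c l : ℝ) (hc : 0 < c) (x y : ℝ) (hq : ¬(x = 0 ∧ y = 0))
    (hx : 0 ≤ x) (hy : 0 ≤ y)
    (e0 : (c + 2) * x + y = l * x) (e1 : x + 2 * y = l * y)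
    (htop : (c + 4 + Real.sqrt (c ^ 2 + 4)) / 2 ≤ l) :
    0 < x ∧ y = (Real.sqrt (c ^ 2 + 4) - c) / 2 * x := by
  set d := Real.sqrt (c ^ 2 + 4) with hd
  have hd2 : d ^ 2 = c ^ 2 + 4 := Real.sq_sqrt (by positivity)
  have hd0 : 0 ≤ d := Real.sqrt_nonneg _
  have hdgt2 : 2 < d := by nlinarith
  have hxpos : 0 < x := by
    rcases lt_or_eq_of_le hx with h | h
    · exact h
    · exfalso
      rw [← h] at e0 e1
      simp at e0 e1
      exact hq ⟨h.symm, by linarith [e0]⟩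
  have hypos : 0 < y := by
    rcases lt_or_eq_of_le hy with h | h
    · exact h
    · exfalso
      rw [← h] at e1
      simp at e1
      nlinarith
  have hquad : l ^ 2 - (c + 4) * l + (2 * c + 3) = 0 := by
    have h1 : y = (l - c - 2) * x := by linarith
    have h2 : x = (l - 2) * y := by linarith
    have : (l - 2) * (l - c - 2) * x = x := by
      nlinarith [h1, h2]
    have hfac : ((l - 2) * (l - c - 2) - 1) * x = 0 := by ring_nf; ring_nf at this; linarith
    have := (mul_eq_zero.mp hfac).resolve_right (ne_of_gt hxpos)
    nlinarith [this]
  have hl : l = (c + 4 + d) / 2 := by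
    have hprod : (l - (c + 4 + d) / 2) * (l - (c + 4 - d) / 2) = 0 := by
      nlinarith [hquad, hd2]
    rcases mul_eq_zero.mp hprod with h | h
    · linarith
    · exfalso; nlinarith
  refine ⟨hxpos, ?_⟩
  have : y = (l - c - 2) * x := by linarith
  rw [this, hl]; ring

lemma cosSim_calc (x y P Q : ℝ) (hx : 0 < x) (hy : 0 < y) (hPQ : 0 < P ^ 2 + Q ^ 2) :
    cosSim ![x * (P + Q), x * (P - Q)] ![y * (P - Q), y * (P + Q)]
      = (P ^ 2 - Q ^ 2) / (P ^ 2 + Q ^ 2) := by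
  unfold cosSim
  simp only [dotProduct, Fin.sum_univ_two, Matrix.cons_val_zero, Matrix.cons_val_one,
    Matrix.head_cons]
  rw [show x * (P + Q) * (x * (P + Q)) + x * (P - Q) * (x * (P - Q))
      = x ^ 2 * (2 * (P ^ 2 + Q ^ 2)) by ring]
  rw [show y * (P - Q) * (y * (P - Q)) + y * (P + Q) * (y * (P + Q))
      = y ^ 2 * (2 * (P ^ 2 + Q ^ 2)) by ring]
  rw [Real.sqrt_mul (sq_nonneg x), Real.sqrt_mul (sq_nonneg y),
    Real.sqrt_sq hx.le, Real.sqrt_sq hy.le]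
  rw [show x * Real.sqrt (2 * (P ^ 2 + Q ^ 2)) * (y * Real.sqrt (2 * (P ^ 2 + Q ^ 2)))
      = x * y * (Real.sqrt (2 * (P ^ 2 + Q ^ 2)) * Real.sqrt (2 * (P ^ 2 + Q ^ 2))) by ring,
    Real.mul_self_sqrt (by positivity)]
  rw [show x * (P + Q) * (y * (P - Q)) + x * (P - Q) * (y * (P + Q))
      = x * y * (2 * (P ^ 2 - Q ^ 2)) by ring]
  rw [show x * y * (2 * (P ^ 2 + Q ^ 2)) = (x * y * 2) * (P ^ 2 + Q ^ 2) by ring,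
    show x * y * (2 * (P ^ 2 - Q ^ 2)) = (x * y * 2) * (P ^ 2 - Q ^ 2) by ring]
  rw [mul_div_mul_left _ _ (by positivity)]

lemma cosSim_q (e x y : ℝ) (hx : 0 < x) (hy : 0 < y) (he : 0 < e) :
    cosSim ![x, e * x] ![e * y, y] = 2 * e / (1 + e ^ 2) := by
  unfold cosSim
  simp only [dotProduct, Fin.sum_univ_two, Matrix.cons_val_zero, Matrix.cons_val_one,
    Matrix.head_cons]
  rw [show x * x + e * x * (e * x) = x ^ 2 * (1 + e ^ 2) by ring]
  rw [show e * y * (e * y) + y * y = y ^ 2 * (1 + e ^ 2) by ring]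
  rw [Real.sqrt_mul (sq_nonneg x), Real.sqrt_mul (sq_nonneg y),
    Real.sqrt_sq hx.le, Real.sqrt_sq hy.le]
  rw [show x * Real.sqrt (1 + e ^ 2) * (y * Real.sqrt (1 + e ^ 2))
      = x * y * (Real.sqrt (1 + e ^ 2) * Real.sqrt (1 + e ^ 2)) by ring,
    Real.mul_self_sqrt (by positivity)]
  rw [show x * (e * y) + e * x * y = (x * y) * (2 * e) by ring,
    show x * y * (1 + e ^ 2) = (x * y) * (1 + e ^ 2) by ring]
  rw [mul_div_mul_left _ _ (by positivity)]

lemma gAE_sq_le {b₁ b₂ : ℝ} (h0 : 0 ≤ b₁) (h12 : b₁ ≤ b₂) : gAE b₁ ^ 2 ≤ gAE b₂ ^ 2 := by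
  rw [gAE_sq, gAE_sq]
  have := psiAE_strictMono.monotone (pow_le_pow_left₀ h0 h12 2)
  linarith

lemma cosval_gt {d γ : ℝ} (hd : 2 < d) (hγ : 0 < γ) :
    2 / d < (2 + γ * d) / (2 * γ + d) := by
  rw [div_lt_div_iff₀ (by linarith) (by linarith)]
  nlinarith [mul_pos hγ (show (0:ℝ) < d ^ 2 - 4 by nlinarith)]

lemma cosval_mono {d γ₁ γ₂ : ℝ} (hd : 2 < d) (h1 : 0 ≤ γ₁) (hlt : γ₁ < γ₂) :
    (2 + γ₁ * d) / (2 * γ₁ + d) < (2 + γ₂ * d) / (2 * γ₂ + d) := by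
  rw [div_lt_div_iff₀ (by linarith) (by linarith)]
  nlinarith [mul_pos (sub_pos.mpr hlt) (show (0:ℝ) < d ^ 2 - 4 by nlinarith)]

lemma cosval_formula {d A C : ℝ} (hd : 2 < d) (hC : 0 < C) (hCA : C ≤ A) :
    (A * (d + 2) - C * (d - 2)) / (A * (d + 2) + C * (d - 2))
      = (2 + (A - C) / (A + C) * d) / (2 * ((A - C) / (A + C)) + d) := by
  have hACpos : 0 < A + C := by linarith
  have hq : 0 ≤ (A - C) / (A + C) := div_nonneg (by linarith) hACpos.le
  have hDen : 0 < A * (d + 2) + C * (d - 2) := by nlinarith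
  rw [div_eq_div_iff (ne_of_gt hDen) (by intro h; nlinarith)]
  field_simp
  ring

lemma mulVec_B (B : Matrix (Fin 2) (Fin 2) ℝ) (α β : ℝ)
    (hB1 : B.mulVec ![1, 1] = α • ![(1:ℝ), 1])
    (hB2 : B.mulVec ![1, -1] = β • ![(1:ℝ), -1]) (q : Fin 2 → ℝ) :
    B.mulVec q = ![(q 0 + q 1) / 2 * α + (q 0 - q 1) / 2 * β,
                   (q 0 + q 1) / 2 * α - (q 0 - q 1) / 2 * β] := by
  have hq : q = ((q 0 + q 1) / 2) • ![(1:ℝ), 1] + ((q 0 - q 1) / 2) • ![(1:ℝ), -1] := by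
    funext i; fin_cases i <;> simp <;> ring
  rw [hq, Matrix.mulVec_add, Matrix.mulVec_smul, Matrix.mulVec_smul, hB1, hB2]
  funext i; fin_cases i <;>
    simp only [Fin.mk_zero, Fin.mk_one, Pi.add_apply, Pi.smul_apply, smul_eq_mul,
      Matrix.cons_val_zero, Matrix.cons_val_one, Matrix.head_cons, Fin.isValue] <;> ring

set_option maxHeartbeats 1000000 in
/-- For `c > 0` and integer `k ≥ 1`, with `Σ₁ = diag(c+1,1) + J`,
`Σ₂ = diag(1,c+1) + J`, top eigenvectors `q₁, q₂` of `Σ₁, Σ₂` chosen with nonnegative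
coordinates, and `B` the symmetric matrix with eigenvector `u₁ = (1/√2)(1,1)ᵀ` of eigenvalue
`α = g((c+7)^k)` and eigenvector `u₂ = (1/√2)(1,−1)ᵀ` of eigenvalue `β = g((c+3)^k)`:
`cos(B q₁, B q₂) = (2 + γ√(c²+4))/(2γ + √(c²+4))` with `γ = (α²−β²)/(α²+β²)`; this value
strictly exceeds `cos(q₁, q₂) = 2/√(4+c²)`, is strictly increasing in `k`, and tends to `1`
as `k → ∞`. -/
theorem stmt16 (c : ℝ) (hc : 0 < c) (k : ℕ) (hk : 1 ≤ k)
    (S₁ S₂ : Matrix (Fin 2) (Fin 2) ℝ)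
    (hS₁ : S₁ = Matrix.diagonal ![c + 1, 1] + !![1, 1; 1, 1])
    (hS₂ : S₂ = Matrix.diagonal ![1, c + 1] + !![1, 1; 1, 1])
    (q₁ q₂ : Fin 2 → ℝ) (l₁ l₂ : ℝ)
    (hq₁ : q₁ ≠ 0) (hq₂ : q₂ ≠ 0)
    (hq₁pos : ∀ i, 0 ≤ q₁ i) (hq₂pos : ∀ i, 0 ≤ q₂ i)
    (he₁ : S₁.mulVec q₁ = l₁ • q₁) (he₂ : S₂.mulVec q₂ = l₂ • q₂)
    (htop₁ : ∀ (μ : ℝ) (v : Fin 2 → ℝ), v ≠ 0 → S₁.mulVec v = μ • v → μ ≤ l₁)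
    (htop₂ : ∀ (μ : ℝ) (v : Fin 2 → ℝ), v ≠ 0 → S₂.mulVec v = μ • v → μ ≤ l₂)
    (B : Matrix (Fin 2) (Fin 2) ℝ)
    (hBsymm : Bᵀ = B)
    (hBu₁ : B.mulVec ((Real.sqrt 2)⁻¹ • ![1, 1]) =
      gAE ((c + 7) ^ k) • ((Real.sqrt 2)⁻¹ • ![1, 1]))
    (hBu₂ : B.mulVec ((Real.sqrt 2)⁻¹ • ![1, -1]) =
      gAE ((c + 3) ^ k) • ((Real.sqrt 2)⁻¹ • ![1, -1])) :
    cosSim (B.mulVec q₁) (B.mulVec q₂) = cosVal c k ∧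
      cosSim q₁ q₂ = 2 / Real.sqrt (4 + c ^ 2) ∧
      cosSim q₁ q₂ < cosVal c k ∧
      (∀ k₁ k₂ : ℕ, 1 ≤ k₁ → k₁ < k₂ → cosVal c k₁ < cosVal c k₂) ∧
      Tendsto (fun k' : ℕ => cosVal c k') atTop (nhds 1) := by
  set d := Real.sqrt (c ^ 2 + 4) with hd
  have hd2 : d ^ 2 = c ^ 2 + 4 := Real.sq_sqrt (by positivity)
  have hd0 : 0 ≤ d := Real.sqrt_nonneg _
  have hdgt2 : 2 < d := by nlinarith
  have hdc : c < d := by nlinarith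
  have hdc2 : d < c + 2 := by nlinarith
  set e := (d - c) / 2 with he
  have hepos : 0 < e := by rw [he]; linarith
  have helt1 : e < 1 := by rw [he]; linarith
  -- eigenvalue equations for q₁
  have h10 := congrFun he₁ 0
  have h11 := congrFun he₁ 1
  rw [hS₁] at h10 h11
  simp [Matrix.mulVec, dotProduct, Fin.sum_univ_two, Matrix.diagonal,
    Matrix.add_apply] at h10 h11
  have e10 : (c + 2) * q₁ 0 + q₁ 1 = l₁ * q₁ 0 := by linarith
  have e11 : q₁ 0 + 2 * q₁ 1 = l₁ * q₁ 1 := by linarith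
  -- eigenvalue equations for q₂
  have h20 := congrFun he₂ 0
  have h21 := congrFun he₂ 1
  rw [hS₂] at h20 h21
  simp [Matrix.mulVec, dotProduct, Fin.sum_univ_two, Matrix.diagonal,
    Matrix.add_apply] at h20 h21
  have e20 : (c + 2) * q₂ 1 + q₂ 0 = l₂ * q₂ 1 := by linarith
  have e21 : q₂ 1 + 2 * q₂ 0 = l₂ * q₂ 0 := by linarith
  -- the top eigenvalue bounds
  have hv1 : S₁.mulVec ![(c + 4 + d) / 2 - 2, 1] = ((c + 4 + d) / 2) • ![(c + 4 + d) / 2 - 2, 1] := by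
    rw [hS₁]
    funext i
    fin_cases i
    · simp [Matrix.mulVec, dotProduct, Fin.sum_univ_two, Matrix.diagonal,
        Matrix.add_apply]
      linear_combination (-1/4 : ℝ) * hd2
    · simp [Matrix.mulVec, dotProduct, Fin.sum_univ_two, Matrix.diagonal,
        Matrix.add_apply]
      ring
  have hv1nz : (![(c + 4 + d) / 2 - 2, 1] : Fin 2 → ℝ) ≠ 0 := by
    intro h; have := congrFun h 1; norm_num at this
  have hμl₁ : (c + 4 + Real.sqrt (c ^ 2 + 4)) / 2 ≤ l₁ := by
    rw [← hd]; exact htop₁ _ _ hv1nz hv1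
  have hv2 : S₂.mulVec ![1, (c + 4 + d) / 2 - 2] = ((c + 4 + d) / 2) • ![1, (c + 4 + d) / 2 - 2] := by
    rw [hS₂]
    funext i
    fin_cases i
    · simp [Matrix.mulVec, dotProduct, Fin.sum_univ_two, Matrix.diagonal,
        Matrix.add_apply]
      ring
    · simp [Matrix.mulVec, dotProduct, Fin.sum_univ_two, Matrix.diagonal,
        Matrix.add_apply]
      linear_combination (-1/4 : ℝ) * hd2
  have hv2nz : (![(1:ℝ), (c + 4 + d) / 2 - 2] : Fin 2 → ℝ) ≠ 0 := by
    intro h; have := congrFun h 0; norm_num at this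
  have hμl₂ : (c + 4 + Real.sqrt (c ^ 2 + 4)) / 2 ≤ l₂ := by
    rw [← hd]; exact htop₂ _ _ hv2nz hv2
  -- directions of q₁ and q₂
  have hq1nz : ¬(q₁ 0 = 0 ∧ q₁ 1 = 0) := by
    rintro ⟨h0, h1⟩; apply hq₁; funext i; fin_cases i <;> simpa
  have hq2nz : ¬(q₂ 1 = 0 ∧ q₂ 0 = 0) := by
    rintro ⟨h0, h1⟩; apply hq₂; funext i; fin_cases i <;> simpa
  obtain ⟨hx1, hy1⟩ := eig_dir c l₁ hc (q₁ 0) (q₁ 1) hq1nz (hq₁pos 0) (hq₁pos 1) e10 e11 hμl₁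
  obtain ⟨hx2, hy2⟩ := eig_dir c l₂ hc (q₂ 1) (q₂ 0) hq2nz (hq₂pos 1) (hq₂pos 0) e20 e21 hμl₂
  rw [← hd, ← he] at hy1 hy2
  -- the action of B
  set α := gAE ((c + 7) ^ k) with hα
  set β := gAE ((c + 3) ^ k) with hβ
  have hαpos : 0 < α := gAE_pos _
  have hβpos : 0 < β := gAE_pos _
  have hs2 : ((Real.sqrt 2)⁻¹ : ℝ) ≠ 0 := by
    simp [Real.sqrt_eq_zero']
  have hB1 : B.mulVec ![1, 1] = α • ![(1:ℝ), 1] := by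
    rw [Matrix.mulVec_smul, smul_comm] at hBu₁
    exact smul_right_injective _ hs2 hBu₁
  have hB2 : B.mulVec ![1, -1] = β • ![(1:ℝ), -1] := by
    rw [Matrix.mulVec_smul, smul_comm] at hBu₂
    exact smul_right_injective _ hs2 hBu₂
  set P := α * (1 + e) with hP
  set Q := β * (1 - e) with hQ
  have hPpos : 0 < P := mul_pos hαpos (by linarith)
  have hQpos : 0 < Q := mul_pos hβpos (by linarith)
  have hPQpos : 0 < P ^ 2 + Q ^ 2 := by positivity
  have hw1 : B.mulVec q₁ = ![q₁ 0 / 2 * (P + Q), q₁ 0 / 2 * (P - Q)] := by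
    rw [mulVec_B B α β hB1 hB2 q₁, hy1]
    funext i; fin_cases i <;>
      simp only [Fin.mk_zero, Fin.mk_one, Matrix.cons_val_zero, Matrix.cons_val_one,
        Matrix.head_cons, Fin.isValue] <;> rw [hP, hQ] <;> ring
  have hw2 : B.mulVec q₂ = ![q₂ 1 / 2 * (P - Q), q₂ 1 / 2 * (P + Q)] := by
    rw [mulVec_B B α β hB1 hB2 q₂, hy2]
    funext i; fin_cases i <;>
      simp only [Fin.mk_zero, Fin.mk_one, Matrix.cons_val_zero, Matrix.cons_val_one,
        Matrix.head_cons, Fin.isValue] <;> rw [hP, hQ] <;> ring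
  -- algebraic facts
  have hA : α ^ 2 = gAE ((c + 7) ^ k) ^ 2 := by rw [hα]
  have h1pe : (1 + e) ^ 2 = (d - c) * (d + 2) / 2 := by
    rw [he]; linear_combination (-1/4 : ℝ) * hd2
  have h1me : (1 - e) ^ 2 = (d - c) * (d - 2) / 2 := by
    rw [he]; linear_combination (-1/4 : ℝ) * hd2
  have h1pe2 : 1 + e ^ 2 = d * (d - c) / 2 := by
    rw [he]; linear_combination (-1/4 : ℝ) * hd2
  have hγpos : 0 < gammaAE c k := gammaAE_pos hc hk
  have hCA : β ^ 2 ≤ α ^ 2 := by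
    rw [hα, hβ]
    exact gAE_sq_le (by positivity) (pow_le_pow_left₀ (by linarith) (by linarith) k)
  -- the main cosine equality
  have hcosB : cosSim (B.mulVec q₁) (B.mulVec q₂) = cosVal c k := by
    rw [hw1, hw2, cosSim_calc _ _ _ _ (by linarith) (by linarith) hPQpos]
    have hP2 : P ^ 2 = α ^ 2 * ((d - c) * (d + 2) / 2) := by
      rw [hP, mul_pow, h1pe]
    have hQ2 : Q ^ 2 = β ^ 2 * ((d - c) * (d - 2) / 2) := by
      rw [hQ, mul_pow, h1me]
    rw [hP2, hQ2]
    have hstep : (α ^ 2 * ((d - c) * (d + 2) / 2) - β ^ 2 * ((d - c) * (d - 2) / 2)) /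
        (α ^ 2 * ((d - c) * (d + 2) / 2) + β ^ 2 * ((d - c) * (d - 2) / 2))
        = (α ^ 2 * (d + 2) - β ^ 2 * (d - 2)) / (α ^ 2 * (d + 2) + β ^ 2 * (d - 2)) := by
      rw [show α ^ 2 * ((d - c) * (d + 2) / 2) - β ^ 2 * ((d - c) * (d - 2) / 2)
          = ((d - c) / 2) * (α ^ 2 * (d + 2) - β ^ 2 * (d - 2)) by ring,
        show α ^ 2 * ((d - c) * (d + 2) / 2) + β ^ 2 * ((d - c) * (d - 2) / 2)
          = ((d - c) / 2) * (α ^ 2 * (d + 2) + β ^ 2 * (d - 2)) by ring,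
        mul_div_mul_left _ _ (by linarith : (d - c) / 2 ≠ 0)]
    rw [hstep]
    unfold cosVal gammaAE
    rw [← hd, ← hα, ← hβ]
    exact cosval_formula hdgt2 (by positivity) hCA
  have hcosq : cosSim q₁ q₂ = 2 / Real.sqrt (4 + c ^ 2) := by
    have hq1eq : q₁ = ![q₁ 0, e * q₁ 0] := by
      funext i; fin_cases i <;> simp [hy1]
    have hq2eq : q₂ = ![e * q₂ 1, q₂ 1] := by
      funext i; fin_cases i <;> simp [hy2]
    rw [hq1eq, hq2eq, cosSim_q e _ _ hx1 hx2 hepos]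
    rw [show (4:ℝ) + c ^ 2 = c ^ 2 + 4 by ring, ← hd]
    rw [h1pe2]
    have hpos1 : (0:ℝ) < d * (d - c) / 2 := by
      have h1 : (0:ℝ) < d - c := by linarith
      have := mul_pos (show (0:ℝ) < d by linarith) h1
      linarith
    rw [div_eq_div_iff (ne_of_gt hpos1) (ne_of_gt (show (0:ℝ) < d by linarith))]
    rw [he]; ring
  have hlt : cosSim q₁ q₂ < cosVal c k := by
    rw [hcosq, show (4:ℝ) + c ^ 2 = c ^ 2 + 4 by ring, ← hd]
    unfold cosVal
    rw [← hd]
    exact cosval_gt hdgt2 hγpos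
  have hmono : ∀ k₁ k₂ : ℕ, 1 ≤ k₁ → k₁ < k₂ → cosVal c k₁ < cosVal c k₂ := by
    intro k₁ k₂ h1 hlt12
    unfold cosVal
    rw [← hd]
    exact cosval_mono hdgt2 (gammaAE_nonneg hc k₁) (gammaAE_strictMono hc hlt12)
  have htend : Tendsto (fun k' : ℕ => cosVal c k') atTop (nhds 1) := by
    have hγt := gammaAE_tendsto hc
    have hnum : Tendsto (fun k' : ℕ => 2 + gammaAE c k' * Real.sqrt (c ^ 2 + 4)) atTop
        (nhds (2 + 1 * Real.sqrt (c ^ 2 + 4))) :=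
      tendsto_const_nhds.add (hγt.mul_const _)
    have hden : Tendsto (fun k' : ℕ => 2 * gammaAE c k' + Real.sqrt (c ^ 2 + 4)) atTop
        (nhds (2 * 1 + Real.sqrt (c ^ 2 + 4))) :=
      (hγt.const_mul _).add tendsto_const_nhds
    have hne : (2 * 1 + Real.sqrt (c ^ 2 + 4)) ≠ 0 := by
      rw [← hd]; exact ne_of_gt (by linarith)
    have h := hnum.div hden hne
    have heq : (2 + 1 * Real.sqrt (c ^ 2 + 4)) / (2 * 1 + Real.sqrt (c ^ 2 + 4)) = 1 := by
      rw [one_mul, mul_one]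
      rw [← hd]
      exact div_self (ne_of_gt (by linarith))
    rw [heq] at h
    exact h
  exact ⟨hcosB, hcosq, hlt, hmono, htend⟩
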